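/- For a level-transitive self-similar group of finite type G_P given by patterns of depth d, the level stabilizer St_{G_P}(n) for n ≥ d is isomorphic to the direct product of |X|^{n-d+1} copies of St_{G_P}(d-1), with each factor acting on the corresponding subtree vX* for v ∈ X^{n-d+1}. -/

import Mathlib

open List

/-- The group of automorphisms of the rooted tree `X*` (vertices = words over `X`,
root = empty word, edges `(v, vx)`), as a subgroup of the permutations of `List X`. -/
def treeAut (X : Type*) : Subgroup (Equiv.Perm (List X)) where
  carrier := {f | f [] = [] ∧ ∀ (v : List X) (x : X), ∃ y : X, f (v ++ [x]) = f v ++ [y]}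
  one_mem' := ⟨rfl, fun _ x => ⟨x, rfl⟩⟩
  mul_mem' := by
    rintro f g ⟨hf0, hf⟩ ⟨hg0, hg⟩
    refine ⟨by simp [Equiv.Perm.mul_apply, hg0, hf0], fun v x => ?_⟩
    obtain ⟨y, hy⟩ := hg v x
    obtain ⟨z, hz⟩ := hf (g v) y
    exact ⟨z, by simp [Equiv.Perm.mul_apply, hy, hz]⟩
  inv_mem' := by
    rintro f ⟨hf0, hf⟩
    have h0 : f⁻¹ [] = ([] : List _) := by
      have h : f⁻¹ (f []) = [] := by simp
      rwa [hf0] at h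
    refine ⟨h0, fun v x => ?_⟩
    rcases List.eq_nil_or_concat (f⁻¹ (v ++ [x])) with h | ⟨w, z, hw⟩
    · exfalso
      have h1 : v ++ [x] = f ([] : List _) := by
        have := congrArg (fun t => f t) h
        simpa using this
      rw [hf0] at h1
      simp at h1
    · rw [List.concat_eq_append] at hw
      obtain ⟨y, hy⟩ := hf w z
      have h2 : f w ++ [y] = v ++ [x] := by
        rw [← hy]
        have := congrArg (fun t => f t) hw
        simpa using this.symm
      have h3 := (List.append_inj' h2 rfl).1
      have h4 : w = f⁻¹ v := by rw [← h3]; simp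
      exact ⟨z, by rw [hw, h4]⟩

theorem treeAut.length_apply {X : Type*} {f : Equiv.Perm (List X)} (hf : f ∈ treeAut X)
    (v : List X) : (f v).length = v.length := by
  induction v using List.reverseRecOn with
  | nil => simp [hf.1]
  | append_singleton v x ih =>
      obtain ⟨y, hy⟩ := hf.2 v x
      simp [hy, ih]

/-- The section function: `sectFun f v w` is the word `u` with `f (v ++ w) = f v ++ u`. -/
def sectFun {X : Type*} (f : Equiv.Perm (List X)) (v w : List X) : List X :=
  (f (v ++ w)).drop v.length

theorem treeAut.apply_append {X : Type*} {f : Equiv.Perm (List X)} (hf : f ∈ treeAut X)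
    (v w : List X) : f (v ++ w) = f v ++ sectFun f v w := by
  have hpre : f v <+: f (v ++ w) := by
    induction w using List.reverseRecOn with
    | nil => simp
    | append_singleton w x ih =>
        obtain ⟨y, hy⟩ := hf.2 (v ++ w) x
        rw [← List.append_assoc, hy]
        exact ih.trans (List.prefix_append _ _)
  obtain ⟨t, ht⟩ := hpre
  have hd : sectFun f v w = t := by
    simp only [sectFun]
    rw [← ht, ← treeAut.length_apply hf v, List.drop_left]
  rw [hd, ht]

/-- The section of a tree automorphism `g` at a vertex `v`, as a tree automorphism. -/
def sect {X : Type*} (g : ↥(treeAut X)) (v : List X) : ↥(treeAut X) := by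
  refine ⟨{ toFun := sectFun (g : Equiv.Perm (List X)) v
            invFun := sectFun ((g : Equiv.Perm (List X))⁻¹) ((g : Equiv.Perm (List X)) v)
            left_inv := ?_
            right_inv := ?_ }, ?_, ?_⟩
  · intro w
    show sectFun _ _ (sectFun _ _ _) = w
    have ha := treeAut.apply_append g.2 v w
    simp only [sectFun] at ha ⊢
    rw [← ha, (by simp : (g : Equiv.Perm (List X))⁻¹ ((g : Equiv.Perm (List X)) (v ++ w)) = v ++ w), treeAut.length_apply g.2, List.drop_left]
  · intro w
    have hginv : (g : Equiv.Perm (List X))⁻¹ ∈ treeAut X := (treeAut X).inv_mem g.2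
    show sectFun _ _ (sectFun _ _ _) = w
    have key : (v : List X) ++ sectFun ((g : Equiv.Perm (List X))⁻¹) ((g : Equiv.Perm (List X)) v) w
        = (g : Equiv.Perm (List X))⁻¹ ((g : Equiv.Perm (List X)) v ++ w) := by
      have h1 := treeAut.apply_append hginv ((g : Equiv.Perm (List X)) v) w
      have h2 : (g : Equiv.Perm (List X))⁻¹ ((g : Equiv.Perm (List X)) v) = v := by simp
      rw [h1, h2]
    simp only [sectFun]
    simp only [sectFun] at key
    rw [key]
    simp [treeAut.length_apply g.2]
  · show sectFun _ _ [] = []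
    simp only [sectFun, List.append_nil]
    exact List.drop_eq_nil_of_le (le_of_eq (treeAut.length_apply g.2 v))
  · intro w x
    show ∃ y, sectFun _ _ (w ++ [x]) = sectFun _ _ w ++ [y]
    obtain ⟨y, hy⟩ := g.2.2 (v ++ w) x
    refine ⟨y, ?_⟩
    simp only [sectFun]
    rw [← List.append_assoc, hy, List.drop_append_of_le_length]
    rw [treeAut.length_apply g.2]
    simp

theorem sect_apply {X : Type*} (g : ↥(treeAut X)) (v w : List X) :
    ((sect g v : ↥(treeAut X)) : Equiv.Perm (List X)) w
      = sectFun (g : Equiv.Perm (List X)) v w := rfl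

theorem sect_nil {X : Type*} (g : ↥(treeAut X)) : sect g [] = g := by
  apply Subtype.ext
  apply Equiv.ext
  intro w
  rw [sect_apply]
  simp [sectFun]

theorem sect_append {X : Type*} (g : ↥(treeAut X)) (v u : List X) :
    sect g (v ++ u) = sect (sect g v) u := by
  apply Subtype.ext
  apply Equiv.ext
  intro w
  show sectFun (g : Equiv.Perm (List X)) (v ++ u) w
    = sectFun ((sect g v : ↥(treeAut X)) : Equiv.Perm (List X)) u w
  simp only [sectFun, sect_apply]
  rw [List.append_assoc, List.drop_drop, List.length_append, Nat.add_comm]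

theorem sect_one {X : Type*} (v : List X) : sect (1 : ↥(treeAut X)) v = 1 := by
  apply Subtype.ext
  apply Equiv.ext
  intro w
  rw [sect_apply]
  simp [sectFun]

theorem sect_mul {X : Type*} (g h : ↥(treeAut X)) (v : List X) :
    sect (g * h) v = sect g ((h : Equiv.Perm (List X)) v) * sect h v := by
  apply Subtype.ext
  apply Equiv.ext
  intro w
  show (((g * h : ↥(treeAut X)) : Equiv.Perm (List X)) (v ++ w)).drop v.length
      = ((g : Equiv.Perm (List X)) ((h : Equiv.Perm (List X)) v
          ++ sectFun (h : Equiv.Perm (List X)) v w)).drop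
            ((h : Equiv.Perm (List X)) v).length
  have hcoe : ((g * h : ↥(treeAut X)) : Equiv.Perm (List X)) (v ++ w)
      = (g : Equiv.Perm (List X)) ((h : Equiv.Perm (List X)) (v ++ w)) := rfl
  have hh := treeAut.apply_append h.2 v w
  rw [hcoe, hh, treeAut.length_apply h.2]

theorem sect_inv {X : Type*} (g : ↥(treeAut X)) (v : List X) :
    sect g⁻¹ v = (sect g (((g : Equiv.Perm (List X))⁻¹) v))⁻¹ := by
  have h1 : sect (g * g⁻¹) v = 1 := by rw [mul_inv_cancel, sect_one]
  have h2 := (sect_mul g g⁻¹ v).symm.trans h1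
  exact eq_inv_of_mul_eq_one_right h2

/-- The automorphism group of the finite subtree `X^[d]` of words of length at most `d`
is modelled inside the permutations of the set of such words. -/
abbrev Pat (X : Type*) (d : ℕ) := Equiv.Perm {l : List X // l.length ≤ d}

/-- The restriction homomorphism `Aut X* → Sym(X^[d])`. -/
def restr (X : Type*) (d : ℕ) : ↥(treeAut X) →* Pat X d where
  toFun g :=
    { toFun := fun w => ⟨(g : Equiv.Perm (List X)) w.1,
        by rw [treeAut.length_apply g.2]; exact w.2⟩
      invFun := fun w => ⟨(g : Equiv.Perm (List X))⁻¹ w.1,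
        by rw [treeAut.length_apply ((treeAut X).inv_mem g.2)]; exact w.2⟩
      left_inv := fun w => by
        apply Subtype.ext
        simp
      right_inv := fun w => by
        apply Subtype.ext
        simp }
  map_one' := by
    apply Equiv.ext
    intro w
    rfl
  map_mul' := fun g h => by
    apply Equiv.ext
    intro w
    rfl

/-- `Aut X^[d]`: the automorphism group of the finite tree `X^[d]`, realized as the
image of `Aut X*` under restriction (every automorphism of the finite tree extends). -/
def finAut (X : Type*) (d : ℕ) : Subgroup (Pat X d) := (restr X d).range

/-- The `n`-th level stabilizer in `Aut X*`: automorphisms fixing all words of length `≤ n`. -/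
def levelStab (X : Type*) (n : ℕ) : Subgroup ↥(treeAut X) := (restr X n).ker

/-- The self-similar group of finite type `G_P` given by a pattern group `P ≤ Aut X^[d]`:
all tree automorphisms all of whose sections restrict to elements of `P` on `X^[d]`. -/
def GP (X : Type*) (d : ℕ) (P : Subgroup (Pat X d)) : Subgroup ↥(treeAut X) where
  carrier := {g | ∀ v : List X, restr X d (sect g v) ∈ P}
  one_mem' := fun v => by rw [sect_one, map_one]; exact P.one_mem
  mul_mem' := fun {a b} ha hb v => by
    rw [sect_mul, map_mul]; exact P.mul_mem (ha _) (hb v)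
  inv_mem' := fun {a} ha v => by
    rw [sect_inv, map_inv]; exact P.inv_mem (ha _)

theorem mem_GP {X : Type*} {d : ℕ} {P : Subgroup (Pat X d)} (g : ↥(treeAut X)) :
    g ∈ GP X d P ↔ ∀ v : List X, restr X d (sect g v) ∈ P := Iff.rfl

/-- The edge relation `a →^x b` of the pattern graph `Γ_P`: the section of the pattern `a`
at the letter `x` agrees with the pattern `b` on `X^[d-1]`. -/
def patEdge (X : Type*) (d : ℕ) (a : Pat X d) (x : X) (b : Pat X d) : Prop :=
  ∀ (w : List X) (hw : w.length ≤ d - 1) (hw' : (x :: w).length ≤ d),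
    ((a ⟨x :: w, hw'⟩ : {l : List X // l.length ≤ d}) : List X).tail
      = ((b ⟨w, le_trans hw (Nat.sub_le d 1)⟩ : {l : List X // l.length ≤ d}) : List X)

/-- The subgroup of `Sym(X^[d])` of elements fixing all words of length at most `k`. -/
def patLevelStab (X : Type*) (d k : ℕ) : Subgroup (Pat X d) where
  carrier := {a | ∀ (w : List X) (hw : w.length ≤ d), w.length ≤ k → a ⟨w, hw⟩ = ⟨w, hw⟩}
  one_mem' := fun _ _ _ => rfl
  mul_mem' := fun {a b} ha hb w hw hk => by
    have h1 := hb w hw hk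
    have h2 := ha w hw hk
    show a (b ⟨w, hw⟩) = ⟨w, hw⟩
    rw [h1, h2]
  inv_mem' := fun {a} ha w hw hk => by
    have h1 := ha w hw hk
    have h2 : a⁻¹ (a ⟨w, hw⟩) = ⟨w, hw⟩ := by simp
    rwa [h1] at h2

/-- Level-transitivity: the group acts transitively on every level `X^n` of the tree. -/
def LevelTrans {X : Type*} (G : Subgroup ↥(treeAut X)) : Prop :=
  ∀ u v : List X, u.length = v.length → ∃ g ∈ G, (g : Equiv.Perm (List X)) u = v

/-- Topological finite generation of a closed subgroup `G ≤ Aut X*`, expressed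
concretely: some finite subset of `G` generates a subgroup which is dense in `G`
for the profinite (congruence) topology of `Aut X*`. -/
def TopFG {X : Type*} (G : Subgroup ↥(treeAut X)) : Prop :=
  ∃ S : Finset ↥(treeAut X), (S : Set ↥(treeAut X)) ⊆ (G : Set ↥(treeAut X)) ∧
    ∀ g ∈ G, ∀ n : ℕ, ∃ h ∈ Subgroup.closure (S : Set ↥(treeAut X)),
      ∀ w : List X, w.length ≤ n →
        (h : Equiv.Perm (List X)) w = (g : Equiv.Perm (List X)) w

/-! Write `n = m + (d - 1)`. An element of `St(n)` fixes level `m`, so it is determined by its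
sections at the vertices of level `m`, and these lie in `G_P ∩ St(d - 1)`; taking sections
at level `m` is multiplicative on `St(m)`. Conversely, any family of elements of
`G_P ∩ St(d - 1)` indexed by level `m` glues to a tree automorphism in `St(n)`. The glued
element lies in `G_P`: its section at a vertex of length `≥ m` is a section of one of the
glued pieces, and its section at a shorter vertex fixes `X^[d]`, so restricts to `1 ∈ P`. -/

section Sections

variable {X : Type*}

theorem mem_levelStab_iff {n : ℕ} {g : ↥(treeAut X)} :
    g ∈ levelStab X n ↔ ∀ w : List X, w.length ≤ n → (g : Equiv.Perm (List X)) w = w := by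
  rw [levelStab, MonoidHom.mem_ker]
  constructor
  · intro h w hw
    exact congrArg Subtype.val (Equiv.ext_iff.1 h ⟨w, hw⟩)
  · intro h
    exact Equiv.ext fun w => Subtype.ext (h w.1 w.2)

theorem levelStab_anti {m n : ℕ} (hmn : m ≤ n) : levelStab X n ≤ levelStab X m :=
  fun _ hg => mem_levelStab_iff.2 fun w hw => mem_levelStab_iff.1 hg w (hw.trans hmn)

theorem sect_mem_GP {d : ℕ} {P : Subgroup (Pat X d)} {g : ↥(treeAut X)}
    (hg : g ∈ GP X d P) (v : List X) : sect g v ∈ GP X d P := fun u => by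
  rw [← sect_append]
  exact hg (v ++ u)

theorem sect_mem_levelStab {g : ↥(treeAut X)} {n k : ℕ}
    (hg : g ∈ levelStab X n) {v : List X} (hv : v.length + k ≤ n) :
    sect g v ∈ levelStab X k := by
  rw [mem_levelStab_iff] at hg ⊢
  intro w hw
  have hfix : (g : Equiv.Perm (List X)) (v ++ w) = v ++ w :=
    hg _ (by rw [List.length_append]; omega)
  simp [sect_apply, sectFun, hfix]

theorem sect_mul_of_mem_levelStab {g h : ↥(treeAut X)} {n : ℕ} (hh : h ∈ levelStab X n)
    {v : List X} (hv : v.length ≤ n) : sect (g * h) v = sect g v * sect h v := by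
  rw [sect_mul, mem_levelStab_iff.1 hh v hv]

theorem eq_one_of_sect_eq_one {g : ↥(treeAut X)} {m : ℕ} (hg : g ∈ levelStab X m)
    (hsect : ∀ v : List X, v.length = m → sect g v = 1) : g = 1 := by
  refine Subtype.ext (Equiv.ext fun w => ?_)
  show (g : Equiv.Perm (List X)) w = w
  rcases le_or_gt m w.length with hw | hw
  · have hv : (w.take m).length = m := by rw [List.length_take]; omega
    conv_lhs => rw [← List.take_append_drop m w]
    rw [treeAut.apply_append g.2, mem_levelStab_iff.1 hg _ hv.le, ← sect_apply, hsect _ hv]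
    exact List.take_append_drop m w
  · exact mem_levelStab_iff.1 hg w hw.le

end Sections

section Glue

variable {X : Type*} (m : ℕ)

def glueFun (h : List X → ↥(treeAut X)) (w : List X) : List X :=
  w.take m ++ (h (w.take m) : Equiv.Perm (List X)) (w.drop m)

variable {m}

theorem glueFun_of_length_le {h : List X → ↥(treeAut X)} {w : List X}
    (hw : w.length ≤ m) : glueFun m h w = w := by
  simp [glueFun, List.take_of_length_le hw, List.drop_eq_nil_of_le hw, (h w).2.1]

theorem glueFun_append {h : List X → ↥(treeAut X)} {v : List X} (hv : v.length = m)
    (u : List X) : glueFun m h (v ++ u) = v ++ (h v : Equiv.Perm (List X)) u := by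
  subst hv
  rw [glueFun, List.take_left, List.drop_left]

theorem glueFun_glueFun (h h' : List X → ↥(treeAut X)) (w : List X) :
    glueFun m h (glueFun m h' w) = glueFun m (fun v => h v * h' v) w := by
  rcases le_or_gt w.length m with hw | hw
  · rw [glueFun_of_length_le hw, glueFun_of_length_le hw, glueFun_of_length_le hw]
  · have hv : (w.take m).length = m := by rw [List.length_take]; omega
    rw [← List.take_append_drop m w, glueFun_append hv, glueFun_append hv, glueFun_append hv]
    rfl

theorem glueFun_inv_glueFun (h : List X → ↥(treeAut X)) (w : List X) :
    glueFun m (fun v => (h v)⁻¹) (glueFun m h w) = w := by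
  rw [glueFun_glueFun]
  simp [glueFun]

theorem glueFun_glueFun_inv (h : List X → ↥(treeAut X)) (w : List X) :
    glueFun m h (glueFun m (fun v => (h v)⁻¹) w) = w := by
  rw [glueFun_glueFun]
  simp [glueFun]

theorem glueFun_append_singleton (h : List X → ↥(treeAut X)) (w : List X) (x : X) :
    ∃ y : X, glueFun m h (w ++ [x]) = glueFun m h w ++ [y] := by
  rcases le_or_gt m w.length with hw | hw
  · obtain ⟨y, hy⟩ := (h (w.take m)).2.2 (w.drop m) x
    refine ⟨y, ?_⟩
    rw [glueFun, glueFun, List.take_append_of_le_length hw,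
      List.drop_append_of_le_length hw, hy, List.append_assoc]
  · refine ⟨x, ?_⟩
    rw [glueFun_of_length_le hw.le,
      glueFun_of_length_le (by rw [List.length_append]; simpa using hw)]

variable (m)

def glue (h : List X → ↥(treeAut X)) : ↥(treeAut X) :=
  ⟨⟨glueFun m h, glueFun m fun v => (h v)⁻¹, glueFun_inv_glueFun h, glueFun_glueFun_inv h⟩,
    glueFun_of_length_le (by simp), glueFun_append_singleton h⟩

variable {m}

theorem sect_glue (h : List X → ↥(treeAut X)) {v : List X} (hv : v.length = m) :
    sect (glue m h) v = h v := by
  refine Subtype.ext (Equiv.ext fun w => ?_)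
  show (glueFun m h (v ++ w)).drop v.length = _
  rw [glueFun_append hv, List.drop_left]

theorem glue_mem_levelStab {h : List X → ↥(treeAut X)} {k : ℕ}
    (hh : ∀ v : List X, v.length = m → h v ∈ levelStab X k) : glue m h ∈ levelStab X (m + k) := by
  rw [mem_levelStab_iff]
  intro w hw
  show glueFun m h w = w
  rcases le_or_gt w.length m with hwm | hwm
  · exact glueFun_of_length_le hwm
  · have hv : (w.take m).length = m := by rw [List.length_take]; omega
    rw [← List.take_append_drop m w, glueFun_append hv,
      mem_levelStab_iff.1 (hh _ hv) _ (by rw [List.length_drop]; omega)]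

theorem glue_mem_GP {d : ℕ} {P : Subgroup (Pat X d)} {h : List X → ↥(treeAut X)}
    (hh : ∀ v : List X, v.length = m → h v ∈ GP X d P ⊓ levelStab X (d - 1)) :
    glue m h ∈ GP X d P := by
  have hstab : glue m h ∈ levelStab X (m + (d - 1)) :=
    glue_mem_levelStab fun v hv => (Subgroup.mem_inf.1 (hh v hv)).2
  intro u
  rcases le_or_gt m u.length with hum | hum
  · have hv : (u.take m).length = m := by rw [List.length_take]; omega
    rw [← List.take_append_drop m u, sect_append, sect_glue h hv]
    exact (Subgroup.mem_inf.1 (hh _ hv)).1 _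
  · rw [MonoidHom.mem_ker.1 (sect_mem_levelStab (k := d) hstab (by omega))]
    exact P.one_mem

end Glue

section LevelSections

variable {X : Type*} {d : ℕ} (P : Subgroup (Pat X d)) {m n : ℕ}

def levelSections (hmn : m + (d - 1) ≤ n) :
    ↥(GP X d P ⊓ levelStab X n) →*
      ({v : List X // v.length = m} → ↥(GP X d P ⊓ levelStab X (d - 1))) where
  toFun g v :=
    ⟨sect (g : ↥(treeAut X)) v.1, Subgroup.mem_inf.2
      ⟨sect_mem_GP (Subgroup.mem_inf.1 g.2).1 v.1,
        sect_mem_levelStab (Subgroup.mem_inf.1 g.2).2 (by rw [v.2]; exact hmn)⟩⟩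
  map_one' := funext fun v => Subtype.ext (sect_one v.1)
  map_mul' a b := funext fun v => Subtype.ext <|
    sect_mul_of_mem_levelStab (Subgroup.mem_inf.1 b.2).2 (by rw [v.2]; omega)

theorem levelSections_injective (hmn : m + (d - 1) ≤ n) :
    Function.Injective (levelSections P hmn) := by
  refine (injective_iff_map_eq_one _).2 fun g hg => Subtype.ext ?_
  refine eq_one_of_sect_eq_one (m := m)
    (levelStab_anti (by omega) (Subgroup.mem_inf.1 g.2).2) fun v hv => ?_
  exact congrArg Subtype.val (congrFun hg ⟨v, hv⟩)

theorem levelSections_surjective (hmn : m + (d - 1) = n) :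
    Function.Surjective (levelSections P hmn.le) := by
  intro f
  let h : List X → ↥(treeAut X) := fun v => if hv : v.length = m then f ⟨v, hv⟩ else 1
  have hh : ∀ v (hv : v.length = m), h v = f ⟨v, hv⟩ := fun v hv => dif_pos hv
  have hmem : ∀ v : List X, v.length = m → h v ∈ GP X d P ⊓ levelStab X (d - 1) :=
    fun v hv => hh v hv ▸ (f ⟨v, hv⟩).2
  refine ⟨⟨glue m h, glue_mem_GP hmem, hmn ▸ glue_mem_levelStab fun v hv =>
    (Subgroup.mem_inf.1 (hmem v hv)).2⟩, funext fun v => Subtype.ext ?_⟩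
  exact (sect_glue h v.2).trans (hh v.1 v.2)

end LevelSections

theorem statement14_general {X : Type*} (d : ℕ) (hd : 1 ≤ d)
    (P : Subgroup (Pat X d)) (n : ℕ) (hn : d ≤ n) :
    ∃ e : ↥(GP X d P ⊓ levelStab X n) ≃*
        ({v : List X // v.length = n - d + 1} → ↥(GP X d P ⊓ levelStab X (d - 1))),
      ∀ (g : ↥(GP X d P ⊓ levelStab X n)) (v : {v : List X // v.length = n - d + 1}),
        ((e g v : ↥(GP X d P ⊓ levelStab X (d - 1))) : ↥(treeAut X))
          = sect (g : ↥(treeAut X)) v.1 := by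
  have hmn : n - d + 1 + (d - 1) = n := by omega
  exact ⟨MulEquiv.ofBijective (levelSections P hmn.le)
    ⟨levelSections_injective P hmn.le, levelSections_surjective P hmn⟩, fun _ _ => rfl⟩

/-- for a level-transitive `G_P` of depth `d` and `n ≥ d`, the stabilizer
`St_(G_P)(n)` is isomorphic to the direct product of `|X|^(n-d+1)` copies of
`St_(G_P)(d-1)`, the factor at `v ∈ X^(n-d+1)` acting on the subtree `vX*` (given by the
section at `v`). -/
theorem statement14 {X : Type*} [Fintype X] [Nontrivial X] (d : ℕ) (hd : 1 ≤ d)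
    (P : Subgroup (Pat X d)) (hP : P ≤ finAut X d)
    (htr : LevelTrans (GP X d P)) (n : ℕ) (hn : d ≤ n) :
    ∃ e : ↥(GP X d P ⊓ levelStab X n) ≃*
        ({v : List X // v.length = n - d + 1} → ↥(GP X d P ⊓ levelStab X (d - 1))),
      ∀ (g : ↥(GP X d P ⊓ levelStab X n)) (v : {v : List X // v.length = n - d + 1}),
        ((e g v : ↥(GP X d P ⊓ levelStab X (d - 1))) : ↥(treeAut X))
          = sect (g : ↥(treeAut X)) v.1 :=
  statement14_general d hd P n hn
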